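/- arXiv:1904.10946 — 2 statements merged into one kernel-verified Lean document; each statement's English description precedes it below -/
import Mathlib

section
/- For every s > 0 there exists a constant c_s > 0 such that for all reals τ ≥ 0 and λ ≥ 0 satisfying |τ - λ^(1/s)| > 1, one has |τ^s - λ| ≥ c_s * (1 + λ)^(1 - 1/s). -/
/-!
Put `μ = λ^(1/s)`, so that `λ = μ^s`, and let `a ≤ b` be `τ` and `μ` in increasing order, so
`b - a > 1`. Bernoulli's inequality (for `s ≤ 1`) or `(1 - t)^s ≤ 1 - t` (for `s ≥ 1`) gives
`b^s - a^s ≥ min(s, 1) b^(s-1) (b - a)`. Since `b ≥ (1 + μ)/2` and `b ≤ (1 + μ)(b - a)`, the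
right side is at least `min(s, 1) 2^(-s) (1 + μ)^(s-1)`. Finally
`(1 + μ^s)^(1 - 1/s) ≤ (1 + μ)^(s-1)`, by superadditivity of `x^s` when `s ≥ 1` and
subadditivity when `s ≤ 1`.
-/

open Real

theorem min_mul_le_one_sub_one_sub_rpow {s t : ℝ} (hs : 0 < s) (ht0 : 0 ≤ t) (ht1 : t ≤ 1) :
    min s 1 * t ≤ 1 - (1 - t) ^ s := by
  rcases le_total s 1 with hs1 | hs1
  · have bernoulli := rpow_one_add_le_one_add_mul_self (s := -t) (by linarith) hs.le hs1
    rw [min_eq_left hs1]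
    simp only [← sub_eq_add_neg] at bernoulli
    linarith
  · rw [min_eq_right hs1, one_mul]
    linarith [rpow_le_self_of_le_one (by linarith : 0 ≤ 1 - t) (by linarith) hs1]

theorem min_mul_rpow_sub_one_mul_sub_le_rpow_sub_rpow {s a b : ℝ} (hs : 0 < s) (ha : 0 ≤ a)
    (hab : a ≤ b) :
    min s 1 * b ^ (s - 1) * (b - a) ≤ b ^ s - a ^ s := by
  rcases hab.eq_or_lt with rfl | hab
  · simp
  have hb : 0 < b := ha.trans_lt hab
  have key := min_mul_le_one_sub_one_sub_rpow hs (t := (b - a) / b)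
    (div_nonneg (by linarith) hb.le) ((div_le_one hb).2 (by linarith))
  have ha' : a ^ s = (1 - (b - a) / b) ^ s * b ^ s := by
    rw [← mul_rpow (by field_simp; linarith) hb.le]
    congr 1
    field_simp
    ring
  rw [rpow_sub_one hb.ne', ha']
  calc min s 1 * (b ^ s / b) * (b - a) = min s 1 * ((b - a) / b) * b ^ s := by ring
    _ ≤ (1 - (1 - (b - a) / b) ^ s) * b ^ s := by gcongr
    _ = b ^ s - (1 - (b - a) / b) ^ s * b ^ s := by ring

theorem one_add_rpow_sub_one_le_two_rpow_mul {s a b μ : ℝ} (hs : 0 ≤ s) (ha : 0 ≤ a)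
    (haμ : a ≤ μ) (hμb : μ ≤ b) (hgap : 1 ≤ b - a) :
    (1 + μ) ^ (s - 1) ≤ 2 ^ s * (b ^ (s - 1) * (b - a)) := by
  have hμ : 0 < 1 + μ := by linarith
  have hb : 0 < b := by linarith
  have half_le : (1 + μ) / 2 ≤ b := by linarith
  have le_mul_gap : b ≤ (1 + μ) * (b - a) := by nlinarith
  rw [rpow_sub_one hμ.ne', rpow_sub_one hb.ne']
  calc (1 + μ) ^ s / (1 + μ) = 2 ^ s * (((1 + μ) / 2) ^ s / (1 + μ)) := by
        rw [div_rpow hμ.le zero_le_two]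
        field_simp
    _ ≤ 2 ^ s * (b ^ s * (1 / (1 + μ))) := by
        rw [mul_one_div]
        gcongr
    _ ≤ 2 ^ s * (b ^ s * ((b - a) / b)) := by
        gcongr 2 ^ s * (b ^ s * ?_)
        rw [div_le_div_iff₀ hμ hb]
        linarith
    _ = 2 ^ s * (b ^ s / b * (b - a)) := by ring

theorem one_add_rpow_rpow_one_sub_inv_le {s μ : ℝ} (hs : 0 < s) (hμ : 0 ≤ μ) :
    (1 + μ ^ s) ^ (1 - 1 / s) ≤ (1 + μ) ^ (s - 1) := by
  have hμ1 : 0 < 1 + μ := by linarith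
  have hpow : (1 + μ) ^ (s - 1) = ((1 + μ) ^ s) ^ (1 - 1 / s) := by
    rw [← rpow_mul hμ1.le]
    field_simp
  rw [hpow]
  rcases le_total 1 s with hs1 | hs1
  · have superadd := add_rpow_le_rpow_add zero_le_one hμ hs1
    rw [one_rpow] at superadd
    exact rpow_le_rpow (by positivity) superadd (by rw [sub_nonneg, div_le_one hs]; exact hs1)
  · have subadd := rpow_add_le_add_rpow zero_le_one hμ hs.le hs1
    rw [one_rpow] at subadd
    exact rpow_le_rpow_of_nonpos (by positivity) subadd
      (by rw [sub_nonpos, one_le_div hs]; exact hs1)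

theorem abs_rpow_sub_rpow_eq {s x y : ℝ} (hs : 0 ≤ s) (hx : 0 ≤ x) (hy : 0 ≤ y) :
    |x ^ s - y ^ s| = max x y ^ s - min x y ^ s := by
  rcases le_total x y with h | h
  · rw [max_eq_right h, min_eq_left h, abs_sub_comm,
      abs_of_nonneg (sub_nonneg.2 (rpow_le_rpow hx h hs))]
  · rw [max_eq_left h, min_eq_right h, abs_of_nonneg (sub_nonneg.2 (rpow_le_rpow hy h hs))]

theorem mul_one_add_rpow_sub_one_le_abs_rpow_sub_rpow {s x μ : ℝ} (hs : 0 < s) (hx : 0 ≤ x)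
    (hμ : 0 ≤ μ) (hgap : 1 ≤ |x - μ|) :
    min s 1 / 2 ^ s * (1 + μ) ^ (s - 1) ≤ |x ^ s - μ ^ s| := by
  set a := min x μ
  set b := max x μ
  have hgap' : 1 ≤ b - a := by rwa [max_sub_min_eq_abs, abs_sub_comm]
  have hcomp := one_add_rpow_sub_one_le_two_rpow_mul hs.le (le_min hx hμ) (min_le_right x μ)
    (le_max_right x μ) hgap'
  rw [abs_rpow_sub_rpow_eq hs.le hx hμ]
  calc min s 1 / 2 ^ s * (1 + μ) ^ (s - 1)
      ≤ min s 1 / 2 ^ s * (2 ^ s * (b ^ (s - 1) * (b - a))) := by gcongr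
    _ = min s 1 * b ^ (s - 1) * (b - a) := by field_simp
    _ ≤ b ^ s - a ^ s :=
        min_mul_rpow_sub_one_mul_sub_le_rpow_sub_rpow hs (le_min hx hμ) min_le_max

theorem fractional_resolvent_lower_bound (s : ℝ) (hs : 0 < s) :
    ∃ c : ℝ, 0 < c ∧ ∀ τ lam : ℝ, 0 ≤ τ → 0 ≤ lam →
      |τ - lam ^ (1 / s)| > 1 →
      c * (1 + lam) ^ (1 - 1 / s) ≤ |τ ^ s - lam| := by
  refine ⟨min s 1 / 2 ^ s, by positivity, fun τ lam hτ hlam hgap => ?_⟩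
  set μ := lam ^ (1 / s)
  have hμ : 0 ≤ μ := rpow_nonneg hlam _
  have hlam_eq : lam = μ ^ s := by rw [← rpow_mul hlam, one_div_mul_cancel hs.ne', rpow_one]
  rw [hlam_eq]
  calc min s 1 / 2 ^ s * (1 + μ ^ s) ^ (1 - 1 / s)
      ≤ min s 1 / 2 ^ s * (1 + μ) ^ (s - 1) := by
        gcongr
        exact one_add_rpow_rpow_one_sub_inv_le hs hμ
    _ ≤ |τ ^ s - μ ^ s| := mul_one_add_rpow_sub_one_le_abs_rpow_sub_rpow hs hτ hμ hgap.le
end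

section
/- Let γ : ℝ → [0, M] be bounded measurable with m({x : γ(x) = 0}) > 0, and suppose there exists c > 0 such that c·‖u‖_{L²} ≤ ‖γ·u‖_{L²} holds for every u ∈ L²(ℝ) whose Fourier transform is supported in some ball B(0,R) — for every R > 0. Then we reach a contradiction; hence no such c > 0 exists. -/
open MeasureTheory FourierTransform SchwartzMap
open scoped ENNReal NNReal Real

lemma map_affine_volume {t : ℝ} (ht : 0 < t) (x₀ : ℝ) :
    Measure.map (fun x : ℝ => (x - x₀) / t) volume = ENNReal.ofReal t • volume := by
  have h : (fun x : ℝ => (x - x₀) / t) = (fun y : ℝ => t⁻¹ * y) ∘ (fun x : ℝ => x + (-x₀)) := by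
    funext x; simp only [Function.comp_apply]; ring
  rw [h, ← Measure.map_map (by fun_prop) (by fun_prop)]
  rw [map_add_right_eq_self volume (-x₀), Real.map_volume_mul_left (by positivity : t⁻¹ ≠ 0)]
  simp [abs_of_pos ht]

lemma lintegral_scale (G : ℝ → ℝ≥0∞) (hG : Measurable G) {t : ℝ} (ht : 0 < t) (x₀ : ℝ) :
    ∫⁻ x : ℝ, G ((x - x₀) / t) = ENNReal.ofReal t * ∫⁻ y, G y := by
  rw [← lintegral_map hG (by fun_prop), map_affine_volume ht x₀, lintegral_smul_measure, smul_eq_mul]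

noncomputable def myBump : ContDiffBump (0:ℝ) := ⟨1, 2, one_pos, one_lt_two⟩

lemma myBump_smooth : ContDiff ℝ ((⊤:ℕ∞) : WithTop ℕ∞) (fun x : ℝ => (myBump x : ℂ)) :=
  Complex.ofRealCLM.contDiff.comp myBump.contDiff

lemma myBump_compSupp : HasCompactSupport (fun x : ℝ => (myBump x : ℂ)) :=
  (myBump.hasCompactSupport).comp_left (g := fun r : ℝ => (r:ℂ)) (by simp)

noncomputable def φ : SchwartzMap ℝ ℂ where
  toFun := fun x : ℝ => (myBump x : ℂ)
  smooth' := myBump_smooth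
  decay' := by
    intro kk nn
    have hcont : Continuous (fun x : ℝ => ‖x‖ ^ kk * ‖iteratedFDeriv ℝ nn (fun x : ℝ => (myBump x : ℂ)) x‖) := by
      exact (continuous_norm.pow kk).mul
        ((myBump_smooth.continuous_iteratedFDeriv (mod_cast le_top)).norm)
    have hsupp : HasCompactSupport (fun x : ℝ => ‖x‖ ^ kk * ‖iteratedFDeriv ℝ nn (fun x : ℝ => (myBump x : ℂ)) x‖) :=
      ((myBump_compSupp.iteratedFDeriv nn).norm).mul_left
    obtain ⟨C, hC⟩ := hcont.bounded_above_of_compact_support hsupp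
    refine ⟨C, fun x => ?_⟩
    have := hC x
    rwa [Real.norm_of_nonneg (by positivity)] at this

lemma φ_apply (x : ℝ) : φ x = (myBump x : ℂ) := rfl

lemma φ_zero : φ 0 = 1 := by
  rw [φ_apply]
  norm_cast
  exact myBump.one_of_mem_closedBall (by simp [myBump])

lemma φ_support {x : ℝ} (hx : 2 ≤ |x|) : φ x = 0 := by
  have : myBump x = 0 := by
    apply myBump.zero_of_le_dist
    simpa [myBump] using hx
  rw [φ_apply, this]; simp

noncomputable def kk : SchwartzMap ℝ ℂ := (fourierTransformCLE ℂ (SchwartzMap ℝ ℂ)).symm φ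

lemma kk_fourier : 𝓕 (⇑kk) = ⇑φ := by
  have : fourierTransformCLE ℂ (SchwartzMap ℝ ℂ) kk = φ := (fourierTransformCLE ℂ (SchwartzMap ℝ ℂ)).apply_symm_apply φ
  rw [← this]
  show 𝓕 ⇑kk = ⇑(𝓕 kk : SchwartzMap ℝ ℂ)
  rw [SchwartzMap.fourier_coe]

lemma kk_ne : ⇑kk ≠ (0 : ℝ → ℂ) := by
  intro h
  have hk0 : kk = 0 := by ext x; exact congrFun h x
  have hφ : φ = 0 := by
    rw [← (fourierTransformCLE ℂ (SchwartzMap ℝ ℂ)).apply_symm_apply φ]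
    show fourierTransformCLE ℂ (SchwartzMap ℝ ℂ) kk = 0
    rw [hk0]; simp
  have h1 := φ_zero
  rw [hφ] at h1
  simp at h1

lemma fourier_real_eq (f : ℝ → ℂ) (ξ : ℝ) :
    𝓕 f ξ = ∫ v : ℝ, Real.fourierChar (-(v * ξ)) • f v := by
  rw [Real.fourier_eq]; simp [RCLike.inner_apply, mul_comm]

lemma fourier_comp_affine (f : ℝ → ℂ) {t : ℝ} (ht : 0 < t) (x₀ ξ : ℝ) :
    𝓕 (fun x => f ((x - x₀) / t)) ξ
      = Real.fourierChar (-(x₀ * ξ)) • (|t| • 𝓕 f (t * ξ)) := by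
  rw [fourier_real_eq]
  have step1 : ∫ v : ℝ, Real.fourierChar (-(v * ξ)) • f ((v - x₀) / t)
      = ∫ v : ℝ, Real.fourierChar (-((v + x₀) * ξ)) • f (v / t) := by
    rw [← integral_add_right_eq_self
      (fun v : ℝ => Real.fourierChar (-(v * ξ)) • f ((v - x₀) / t)) x₀]
    congr 1; funext v; simp [add_sub_cancel_right]
  rw [step1]
  have step2 : ∫ v : ℝ, Real.fourierChar (-((v + x₀) * ξ)) • f (v / t)
      = Real.fourierChar (-(x₀ * ξ)) • ∫ v : ℝ, Real.fourierChar (-(v * ξ)) • f (v / t) := by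
    simp_rw [Circle.smul_def, smul_eq_mul]
    rw [← MeasureTheory.integral_const_mul]
    congr 1; funext v
    have h : -((v + x₀) * ξ) = -(x₀ * ξ) + -(v * ξ) := by ring
    rw [h, AddChar.map_add_eq_mul]
    push_cast
    ring
  rw [step2]
  congr 1
  have step3 : ∫ v : ℝ, Real.fourierChar (-(v * ξ)) • f (v / t)
      = |t| • ∫ v : ℝ, Real.fourierChar (-(v * (t * ξ))) • f v := by
    have := MeasureTheory.Measure.integral_comp_mul_left
      (g := fun v : ℝ => Real.fourierChar (-(v * (t * ξ))) • f v) t⁻¹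
    rw [inv_inv] at this
    rw [← this]
    congr 1; funext v
    have h1 : t⁻¹ * v * (t * ξ) = v * ξ := by field_simp
    have h2 : t⁻¹ * v = v / t := by field_simp
    rw [h1, h2]
  rw [step3, fourier_real_eq]
lemma eLpNorm_two (f : ℝ → ℂ) :
    eLpNorm f 2 volume = (∫⁻ x, ((‖f x‖₊ : ℝ≥0∞)) ^ (2:ℝ)) ^ (1/2 : ℝ) := by
  rw [eLpNorm_eq_lintegral_rpow_enorm_toReal two_ne_zero ENNReal.ofNat_ne_top]
  norm_num
  rfl
set_option maxHeartbeats 2000000 in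
theorem no_uniform_bandlimited_bound_if_damping_vanishes
    (γ : ℝ → ℝ) (M : ℝ) (hmeas : Measurable γ) (hbd : ∀ x, 0 ≤ γ x ∧ γ x ≤ M)
    (hzero : 0 < volume {x : ℝ | γ x = 0})
    (c : ℝ) (hc : 0 < c)
    (hyp : ∀ R : ℝ, 0 < R → ∀ u : ℝ → ℂ, MemLp u 2 volume → Integrable u →
      (∀ ξ : ℝ, ξ ∉ Metric.closedBall (0 : ℝ) R → 𝓕 u ξ = 0) →
      c * (eLpNorm u 2 volume).toReal ≤
        (eLpNorm (fun x => (γ x : ℂ) * u x) 2 volume).toReal) :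
    False := by
  classical
  have hM : 0 ≤ M := (hbd 0).1.trans (hbd 0).2
  set A : Set ℝ := {x : ℝ | γ x = 0} with hAdef
  have hA : MeasurableSet A := hmeas (measurableSet_singleton 0)
  -- the kernel
  set K : ℝ → ℝ≥0∞ := fun y => ((‖kk y‖₊ : ℝ≥0∞)) ^ (2:ℝ) with hKdef
  have hKmeas : Measurable K := by
    apply Measurable.pow_const
    exact (measurable_coe_nnreal_ennreal.comp kk.continuous.measurable.nnnorm)
  set C : ℝ := SchwartzMap.seminorm ℝ 0 0 kk with hCdef
  have hC : ∀ x, ‖kk x‖ ≤ C := fun x => kk.norm_le_seminorm ℝ x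
  have hC0 : 0 ≤ C := le_trans (norm_nonneg _) (hC 0)
  have hKbd : ∀ y, K y ≤ (ENNReal.ofReal C) ^ (2:ℝ) := by
    intro y
    apply ENNReal.rpow_le_rpow _ (by norm_num)
    rw [← ENNReal.ofReal_coe_nnreal]
    apply ENNReal.ofReal_le_ofReal
    simpa using hC y
  set I : ℝ≥0∞ := ∫⁻ y, K y with hIdef
  have hIfin : I ≠ ∞ := by
    have hb : ∀ y, K y ≤ ENNReal.ofReal C * (‖kk y‖₊ : ℝ≥0∞) := by
      intro y
      have h1 : K y = (‖kk y‖₊ : ℝ≥0∞) * (‖kk y‖₊ : ℝ≥0∞) := by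
        rw [hKdef]; simp only [ENNReal.rpow_two]; ring
      rw [h1]
      apply mul_le_mul_left
      rw [← ENNReal.ofReal_coe_nnreal]
      exact ENNReal.ofReal_le_ofReal (by simpa using hC y)
    have h2 : I ≤ ENNReal.ofReal C * ∫⁻ y, (‖kk y‖₊ : ℝ≥0∞) := by
      rw [← lintegral_const_mul (ENNReal.ofReal C)
        (f := fun y => ((‖kk y‖₊ : ℝ≥0∞))) (by fun_prop)]
      exact lintegral_mono hb
    have h3 : (∫⁻ y, (‖kk y‖₊ : ℝ≥0∞)) < ∞ := kk.integrable.2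
    exact ne_top_of_le_ne_top (by finiteness) h2
  have hIpos : I ≠ 0 := by
    intro h0
    have hae : ∀ᵐ y ∂(volume : Measure ℝ), K y = 0 := (lintegral_eq_zero_iff hKmeas).1 h0
    have hae2 : ∀ᵐ y ∂(volume : Measure ℝ), (⇑kk : ℝ → ℂ) y = 0 := by
      filter_upwards [hae] with y hy
      rw [hKdef] at hy
      simp only [ENNReal.rpow_two] at hy
      have := pow_eq_zero_iff (n := 2) (by norm_num) |>.1 hy
      simpa using this
    have : (⇑kk : ℝ → ℂ) = 0 :=
      (kk.continuous.ae_eq_iff_eq volume continuous_const).1 hae2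
    exact kk_ne this
  -- density point
  have hden : ∃ x₀, x₀ ∈ A ∧ Filter.Tendsto
      (fun ρ => volume (Aᶜ ∩ Metric.closedBall x₀ ρ) / volume (Metric.closedBall x₀ ρ))
      (nhdsWithin 0 (Set.Ioi 0)) (nhds 0) := by
    have hae := Besicovitch.ae_tendsto_measure_inter_div_of_measurableSet
      (volume : Measure ℝ) hA.compl
    have hae' : ∀ᵐ x ∂(volume : Measure ℝ), x ∈ A → Filter.Tendsto
        (fun ρ => volume (Aᶜ ∩ Metric.closedBall x ρ) / volume (Metric.closedBall x ρ))
        (nhdsWithin 0 (Set.Ioi 0)) (nhds 0) := by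
      filter_upwards [hae] with x hx hxA
      have h0 : (Aᶜ).indicator (1 : ℝ → ℝ≥0∞) x = 0 := by
        simp [Set.indicator_of_notMem, hxA]
      rwa [h0] at hx
    obtain ⟨x₀, hx₀A, hx₀⟩ := Measure.exists_mem_of_measure_ne_zero_of_ae hzero.ne'
      (ae_restrict_of_ae hae')
    exact ⟨x₀, hx₀A, hx₀ hx₀A⟩
  obtain ⟨x₀, hx₀A, hx₀⟩ := hden
  -- the key inequality for every scale t
  have key : ∀ t : ℝ, 0 < t →
      c ^ 2 * I.toReal ≤ M ^ 2 *
        (∫⁻ y, (if γ (t * y + x₀) = 0 then 0 else K y)).toReal := by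
    intro t ht
    set G₂ : ℝ → ℝ≥0∞ := fun y => (if γ (t * y + x₀) = 0 then 0 else K y) with hG₂def
    have hG₂meas : Measurable G₂ := by
      apply Measurable.ite _ measurable_const hKmeas
      exact (hmeas.comp (by fun_prop)) (measurableSet_singleton 0)
    have hG₂le : ∀ y, G₂ y ≤ K y := by
      intro y
      by_cases h : γ (t * y + x₀) = 0 <;> simp [hG₂def, h]
    set J : ℝ≥0∞ := ∫⁻ y, G₂ y with hJdef
    have hJle : J ≤ I := lintegral_mono hG₂le
    have hJfin : J ≠ ∞ := ne_top_of_le_ne_top hIfin hJle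
    set u : ℝ → ℂ := fun x => kk ((x - x₀) / t) with hudef
    have hu_cont : Continuous u := kk.continuous.comp (by fun_prop)
    have hP : ∫⁻ x, ((‖u x‖₊ : ℝ≥0∞)) ^ (2:ℝ) = ENNReal.ofReal t * I :=
      lintegral_scale K hKmeas ht x₀
    have hPfin : ENNReal.ofReal t * I ≠ ∞ := by finiteness
    have hmem : MemLp u 2 volume := by
      refine ⟨hu_cont.aestronglyMeasurable, ?_⟩
      rw [eLpNorm_two, hP]
      exact ENNReal.rpow_lt_top_of_nonneg (by norm_num) hPfin
    have hint : Integrable u volume := by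
      refine ⟨hu_cont.aestronglyMeasurable, ?_⟩
      have h1 : ∫⁻ x, ((‖u x‖₊ : ℝ≥0∞)) = ENNReal.ofReal t * ∫⁻ y, ((‖kk y‖₊ : ℝ≥0∞)) :=
        lintegral_scale (fun y => ((‖kk y‖₊ : ℝ≥0∞))) (by fun_prop) ht x₀
      have h3 : (∫⁻ y, (‖kk y‖₊ : ℝ≥0∞)) < ∞ := kk.integrable.2
      show (∫⁻ x, ((‖u x‖₊ : ℝ≥0∞))) < ∞
      rw [h1]
      exact ENNReal.mul_lt_top ENNReal.ofReal_lt_top h3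
    have hsupp : ∀ ξ : ℝ, ξ ∉ Metric.closedBall (0:ℝ) (2/t) → 𝓕 u ξ = 0 := by
      intro ξ hξ
      rw [hudef]
      rw [fourier_comp_affine (⇑kk) ht x₀ ξ]
      have hφ : 𝓕 (⇑kk) (t * ξ) = 0 := by
        rw [kk_fourier]
        apply φ_support
        have h1 : 2 / t < |ξ| := by
          simpa [Real.dist_eq] using hξ
        rw [abs_mul, abs_of_pos ht]
        calc (2:ℝ) = t * (2 / t) := by field_simp
        _ ≤ t * |ξ| := by nlinarith
      rw [hφ]
      simp
    have hineq := hyp (2/t) (by positivity) u hmem hint hsupp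
    -- compute both sides
    set Q : ℝ≥0∞ := ∫⁻ x, ((‖(γ x : ℂ) * u x‖₊ : ℝ≥0∞)) ^ (2:ℝ) with hQdef
    have hQle : Q ≤ ENNReal.ofReal (M^2) * (ENNReal.ofReal t * J) := by
      have hpt : ∀ x, ((‖(γ x : ℂ) * u x‖₊ : ℝ≥0∞)) ^ (2:ℝ)
          ≤ ENNReal.ofReal (M^2) * G₂ ((x - x₀) / t) := by
        intro x
        have harg : t * ((x - x₀) / t) + x₀ = x := by field_simp; ring
        by_cases hx : γ x = 0
        · simp [hG₂def, harg, hx]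
        · have hG : G₂ ((x - x₀) / t) = K ((x - x₀) / t) := by
            rw [hG₂def]; simp [harg, hx]
          rw [hG]
          have hnorm : ((‖(γ x : ℂ) * u x‖₊ : ℝ≥0∞)) ^ (2:ℝ)
              = ((‖(γ x : ℂ)‖₊ : ℝ≥0∞)) ^ (2:ℝ) * ((‖u x‖₊ : ℝ≥0∞)) ^ (2:ℝ) := by
            rw [nnnorm_mul, ENNReal.coe_mul, ENNReal.mul_rpow_of_nonneg _ _ (by norm_num)]
          rw [hnorm]
          have hK : ((‖u x‖₊ : ℝ≥0∞)) ^ (2:ℝ) = K ((x - x₀)/t) := rfl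
          rw [hK]
          apply mul_le_mul_left
          have : ((‖(γ x : ℂ)‖₊ : ℝ≥0∞)) ≤ ENNReal.ofReal M := by
            rw [← ENNReal.ofReal_coe_nnreal]
            apply ENNReal.ofReal_le_ofReal
            simp only [coe_nnnorm, Complex.norm_real, Real.norm_eq_abs]
            rw [abs_of_nonneg (hbd x).1]
            exact (hbd x).2
          calc ((‖(γ x : ℂ)‖₊ : ℝ≥0∞)) ^ (2:ℝ) ≤ (ENNReal.ofReal M) ^ (2:ℝ) :=
              ENNReal.rpow_le_rpow this (by norm_num)
          _ = ENNReal.ofReal (M^2) := by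
              rw [ENNReal.rpow_two, ← ENNReal.ofReal_pow hM]
      calc Q ≤ ∫⁻ x, ENNReal.ofReal (M^2) * G₂ ((x - x₀) / t) := lintegral_mono hpt
      _ = ENNReal.ofReal (M^2) * ∫⁻ x, G₂ ((x - x₀) / t) := by
          rw [lintegral_const_mul (ENNReal.ofReal (M^2))
            (f := fun x => G₂ ((x - x₀)/t)) (by fun_prop)]
      _ = ENNReal.ofReal (M^2) * (ENNReal.ofReal t * J) := by
          rw [lintegral_scale G₂ hG₂meas ht x₀]
    have hQfin : Q ≠ ∞ := ne_top_of_le_ne_top (by finiteness) hQle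
    -- turn hineq into real inequality
    have hL : eLpNorm u 2 volume = (ENNReal.ofReal t * I) ^ (1/2:ℝ) := by
      rw [eLpNorm_two, hP]
    have hR : eLpNorm (fun x => (γ x : ℂ) * u x) 2 volume = Q ^ (1/2:ℝ) := by
      rw [eLpNorm_two]
    rw [hL, hR, ← ENNReal.toReal_rpow, ← ENNReal.toReal_rpow] at hineq
    set p : ℝ := (ENNReal.ofReal t * I).toReal with hpdef
    set q : ℝ := Q.toReal with hqdef
    have hp0 : 0 ≤ p := ENNReal.toReal_nonneg
    have hq0 : 0 ≤ q := ENNReal.toReal_nonneg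
    rw [← Real.sqrt_eq_rpow, ← Real.sqrt_eq_rpow] at hineq
    have hsq : c^2 * p ≤ q := by
      have h1 : (c * Real.sqrt p) * (c * Real.sqrt p) ≤ Real.sqrt q * Real.sqrt q :=
        mul_self_le_mul_self (by positivity) hineq
      rw [Real.mul_self_sqrt hq0] at h1
      nlinarith [Real.sq_sqrt hp0]
    have hpval : p = t * I.toReal := by
      rw [hpdef, ENNReal.toReal_mul, ENNReal.toReal_ofReal ht.le]
    have hqval : q ≤ M^2 * (t * J.toReal) := by
      have := ENNReal.toReal_mono (by finiteness) hQle
      rw [ENNReal.toReal_mul, ENNReal.toReal_mul,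
        ENNReal.toReal_ofReal (by positivity), ENNReal.toReal_ofReal ht.le] at this
      exact this
    rw [hpval] at hsq
    have := hsq.trans hqval
    have hJ' : c^2 * I.toReal ≤ M^2 * J.toReal := by
      have h2 : t * (c^2 * I.toReal) ≤ t * (M^2 * J.toReal) := by ring_nf; ring_nf at this; linarith
      exact le_of_mul_le_mul_left h2 ht
    exact hJ'
  -- now choose parameters
  have hB : 0 < c^2 * I.toReal := by
    have : 0 < I.toReal := ENNReal.toReal_pos hIpos hIfin
    positivity
  set B : ℝ := c^2 * I.toReal with hBdef
  set η : ℝ := B / (M^2 + 1) with hηdef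
  have hη : 0 < η := by positivity
  -- tail estimate: choose r
  have htail : ∃ r : ℝ, 0 < r ∧ ∫⁻ y in (Metric.closedBall (0:ℝ) r)ᶜ, K y
      < ENNReal.ofReal (η/2) := by
    set ν : Measure ℝ := volume.withDensity K with hνdef
    have hνfin : ν Set.univ ≠ ∞ := by
      rw [hνdef, withDensity_apply _ MeasurableSet.univ]
      simpa [Measure.restrict_univ] using hIfin
    have hiter : Filter.Tendsto (fun n : ℕ => ν (Metric.closedBall (0:ℝ) n)ᶜ)
        Filter.atTop (nhds (ν (⋂ n : ℕ, (Metric.closedBall (0:ℝ) n)ᶜ))) := by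
      apply MeasureTheory.tendsto_measure_iInter_atTop
      · intro n; exact (Metric.isClosed_closedBall.measurableSet).compl.nullMeasurableSet
      · intro m n hmn
        apply Set.compl_subset_compl.2
        exact Metric.closedBall_subset_closedBall (by exact_mod_cast hmn)
      · exact ⟨0, ne_top_of_le_ne_top hνfin (measure_mono (Set.subset_univ _))⟩
    have hempty : (⋂ n : ℕ, (Metric.closedBall (0:ℝ) n)ᶜ) = ∅ := by
      ext y
      simp only [Set.mem_iInter, Set.mem_compl_iff, Metric.mem_closedBall, Set.mem_empty_iff_false,
        iff_false, not_forall, not_not]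
      exact ⟨⌈dist y 0⌉₊, Nat.le_ceil _⟩
    rw [hempty, measure_empty] at hiter
    have := hiter.eventually_lt_const (by positivity : (0:ℝ≥0∞) < ENNReal.ofReal (η/2))
    obtain ⟨n, hn⟩ := this.exists_forall_of_atTop
    refine ⟨(n:ℝ) + 1, by positivity, ?_⟩
    have hsub : (Metric.closedBall (0:ℝ) ((n:ℝ)+1))ᶜ ⊆ (Metric.closedBall (0:ℝ) ((n+1:ℕ):ℝ))ᶜ := by
      apply Set.compl_subset_compl.2
      apply Metric.closedBall_subset_closedBall
      push_cast; exact le_rfl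
    have hmeasball : MeasurableSet ((Metric.closedBall (0:ℝ) ((n:ℝ)+1))ᶜ) :=
      Metric.isClosed_closedBall.measurableSet.compl
    calc ∫⁻ y in (Metric.closedBall (0:ℝ) ((n:ℝ)+1))ᶜ, K y
        = ν ((Metric.closedBall (0:ℝ) ((n:ℝ)+1))ᶜ) := (withDensity_apply K hmeasball).symm
      _ ≤ ν ((Metric.closedBall (0:ℝ) ((n+1:ℕ):ℝ))ᶜ) := measure_mono hsub
      _ < ENNReal.ofReal (η/2) := hn (n+1) (Nat.le_succ n)
  obtain ⟨r, hr, htail⟩ := htail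
  set δ' : ℝ := (η/2) / (C^2 * (2*r) + 1) with hδdef
  have hδ : 0 < δ' := by positivity
  have hev := hx₀.eventually_lt_const
    (show (0:ℝ≥0∞) < ENNReal.ofReal δ' by positivity)
  obtain ⟨ρ, hρlt, hρpos⟩ := (hev.and eventually_mem_nhdsWithin).exists
  rw [Set.mem_Ioi] at hρpos
  set t : ℝ := ρ / r with htdef
  have ht : 0 < t := by positivity
  have htr : t * r = ρ := div_mul_cancel₀ _ hr.ne'
  have hρt : ρ / t = r := by rw [htdef]; field_simp
  -- the set H
  set S : Set ℝ := Aᶜ ∩ Metric.closedBall x₀ ρ with hSdef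
  have hSmeas : MeasurableSet S := hA.compl.inter Metric.isClosed_closedBall.measurableSet
  set H : ℝ → ℝ≥0∞ := S.indicator (fun _ => (1:ℝ≥0∞)) with hHdef
  have hHmeas : Measurable H := Measurable.indicator measurable_const hSmeas
  set V : ℝ≥0∞ := volume S with hVdef
  have hVlt : V < ENNReal.ofReal δ' * ENNReal.ofReal (2*ρ) := by
    have hball : volume (Metric.closedBall x₀ ρ) = ENNReal.ofReal (2*ρ) := by
      rw [Real.volume_closedBall]
    rw [hball] at hρlt
    exact (ENNReal.div_lt_iff (Or.inl (ENNReal.ofReal_pos.2 (by positivity)).ne')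
      (Or.inl ENNReal.ofReal_ne_top)).1 hρlt
  -- scaling identity for H
  have hHscale : ∫⁻ y, H (t * y + x₀) = (ENNReal.ofReal t)⁻¹ * V := by
    have h1 : ∫⁻ x, H x = ENNReal.ofReal t * ∫⁻ y, H (t * y + x₀) := by
      have h2 := lintegral_scale (fun y => H (t * y + x₀)) (hHmeas.comp (by fun_prop)) ht x₀
      have h3 : (fun x : ℝ => H (t * ((x - x₀) / t) + x₀)) = H := by
        funext x
        have h5 : t * ((x - x₀) / t) + x₀ = x := by field_simp; ring
        rw [h5]
      simp only [h3] at h2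
      exact h2
    have h4 : ∫⁻ x, H x = V := by
      rw [hHdef, lintegral_indicator hSmeas]; simp [hVdef]
    rw [h4] at h1
    rw [h1, ← mul_assoc, ENNReal.inv_mul_cancel (ENNReal.ofReal_pos.2 ht).ne'
      ENNReal.ofReal_ne_top, one_mul]
  set G₂ : ℝ → ℝ≥0∞ := fun y => (if γ (t * y + x₀) = 0 then 0 else K y) with hG₂def
  have hG₂meas : Measurable G₂ := by
    apply Measurable.ite _ measurable_const hKmeas
    exact (hmeas.comp (by fun_prop)) (measurableSet_singleton 0)
  have hG₂le : ∀ y, G₂ y ≤ K y := by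
    intro y
    by_cases h : γ (t * y + x₀) = 0 <;> simp [hG₂def, h]
  set J : ℝ≥0∞ := ∫⁻ y, G₂ y with hJdef
  have hsplit : J = (∫⁻ y in Metric.closedBall (0:ℝ) r, G₂ y)
      + ∫⁻ y in (Metric.closedBall (0:ℝ) r)ᶜ, G₂ y :=
    (lintegral_add_compl G₂ Metric.isClosed_closedBall.measurableSet).symm
  have hfirst : ∫⁻ y in Metric.closedBall (0:ℝ) r, G₂ y ≤ ENNReal.ofReal (η/2) := by
    have hpt : ∀ y ∈ Metric.closedBall (0:ℝ) r,
        G₂ y ≤ (ENNReal.ofReal C) ^ (2:ℝ) * H (t * y + x₀) := by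
      intro y hy
      by_cases h : γ (t * y + x₀) = 0
      · simp [hG₂def, h]
      · have hmem : (t * y + x₀) ∈ S := by
          constructor
          · simpa [hAdef] using h
          · rw [Metric.mem_closedBall, Real.dist_eq]
            have : t * y + x₀ - x₀ = t * y := by ring
            rw [this, abs_mul, abs_of_pos ht]
            calc t * |y| ≤ t * r := by
                  have := Metric.mem_closedBall.1 hy
                  rw [Real.dist_eq, sub_zero] at this
                  nlinarith
            _ = ρ := htr
        have hH1 : H (t * y + x₀) = 1 := by
          rw [hHdef, Set.indicator_of_mem hmem]
        rw [hH1, mul_one]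
        calc G₂ y = K y := by simp [hG₂def, h]
        _ ≤ (ENNReal.ofReal C) ^ (2:ℝ) := hKbd y
    calc ∫⁻ y in Metric.closedBall (0:ℝ) r, G₂ y
        ≤ ∫⁻ y in Metric.closedBall (0:ℝ) r, (ENNReal.ofReal C) ^ (2:ℝ) * H (t * y + x₀) :=
          setLIntegral_mono (by fun_prop) hpt
      _ ≤ ∫⁻ y, (ENNReal.ofReal C) ^ (2:ℝ) * H (t * y + x₀) :=
          setLIntegral_le_lintegral _ _
      _ = (ENNReal.ofReal C) ^ (2:ℝ) * ∫⁻ y, H (t * y + x₀) := by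
          rw [lintegral_const_mul ((ENNReal.ofReal C) ^ (2:ℝ))
            (f := fun y => H (t * y + x₀)) (hHmeas.comp (by fun_prop))]
      _ = (ENNReal.ofReal C) ^ (2:ℝ) * ((ENNReal.ofReal t)⁻¹ * V) := by rw [hHscale]
      _ ≤ (ENNReal.ofReal C) ^ (2:ℝ)
            * ((ENNReal.ofReal t)⁻¹ * (ENNReal.ofReal δ' * ENNReal.ofReal (2*ρ))) := by
          apply mul_le_mul_right
          exact mul_le_mul_right hVlt.le _
      _ = ENNReal.ofReal (C^2 * (δ' * (2*r))) := by
          rw [ENNReal.rpow_two, ← ENNReal.ofReal_pow hC0,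
            ← ENNReal.ofReal_inv_of_pos ht, ← ENNReal.ofReal_mul (by positivity),
            ← ENNReal.ofReal_mul (by positivity), ← ENNReal.ofReal_mul (by positivity)]
          congr 1
          rw [show t⁻¹ * (δ' * (2*ρ)) = δ' * (2 * (ρ/t)) by ring, hρt]
      _ ≤ ENNReal.ofReal (η/2) := by
          apply ENNReal.ofReal_le_ofReal
          have h5 : δ' * (C^2*(2*r)+1) = η/2 := by
            rw [hδdef]; field_simp
          nlinarith [hδ.le, sq_nonneg C, hr.le]
  have hsecond : ∫⁻ y in (Metric.closedBall (0:ℝ) r)ᶜ, G₂ y < ENNReal.ofReal (η/2) :=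
    lt_of_le_of_lt (lintegral_mono (fun y => hG₂le y)) htail
  have hJlt : J < ENNReal.ofReal η := by
    rw [hsplit]
    calc (∫⁻ y in Metric.closedBall (0:ℝ) r, G₂ y)
        + ∫⁻ y in (Metric.closedBall (0:ℝ) r)ᶜ, G₂ y
        < ENNReal.ofReal (η/2) + ENNReal.ofReal (η/2) :=
          ENNReal.add_lt_add_of_le_of_lt (ne_top_of_le_ne_top ENNReal.ofReal_ne_top hfirst) hfirst hsecond
      _ = ENNReal.ofReal η := by
          rw [← ENNReal.ofReal_add (by positivity) (by positivity)]
          norm_num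
  have hJtoReal : J.toReal < η := ENNReal.toReal_lt_of_lt_ofReal hJlt
  have hkey : B ≤ M^2 * J.toReal := by
    simp only [hJdef, hG₂def]
    exact key t ht
  have hfin : M^2 * J.toReal < B := by
    have h1 : M^2 * J.toReal ≤ M^2 * η := by nlinarith
    have h2 : M^2 * η < (M^2 + 1) * η := by nlinarith
    have h3 : (M^2 + 1) * η = B := by
      rw [hηdef]; field_simp
    linarith
  rw [hBdef] at hfin
  linarith
end
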